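/- Let E be a graph and R a unital commutative ring. If I is a prime ideal of L_R(E), then M := E^0 \ (I ∩ E^0) is a maximal tail in E, i.e., M satisfies conditions (MT1), (MT2), and (MT3). -/

import Mathlib

structure LPGraph where
  V : Type
  E : Type
  s : E → V
  r : E → V

namespace LPGraph

/-- `v ≥ w`: there is a directed path (possibly trivial) from `v` to `w`. -/
def Reaches (G : LPGraph) (v w : G.V) : Prop :=
  Relation.ReflTransGen (fun a b => ∃ e : G.E, G.s e = a ∧ G.r e = b) v w

def Hereditary (G : LPGraph) (X : Set G.V) : Prop :=
  ∀ e : G.E, G.s e ∈ X → G.r e ∈ X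

def Saturated (G : LPGraph) (X : Set G.V) : Prop :=
  ∀ v : G.V, {e : G.E | G.s e = v}.Finite → {e : G.E | G.s e = v}.Nonempty →
    (∀ e : G.E, G.s e = v → G.r e ∈ X) → v ∈ X

/-- The saturation of `X`: the smallest saturated subset containing `X`. -/
def saturation (G : LPGraph) (X : Set G.V) : Set G.V :=
  ⋂₀ {S : Set G.V | G.Saturated S ∧ X ⊆ S}

def tree (G : LPGraph) (v : G.V) : Set G.V := {w | G.Reaches v w}

def MT1 (G : LPGraph) (M : Set G.V) : Prop :=
  ∀ v w : G.V, w ∈ M → G.Reaches v w → v ∈ M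

def MT2 (G : LPGraph) (M : Set G.V) : Prop :=
  ∀ v ∈ M, {e : G.E | G.s e = v}.Finite → {e : G.E | G.s e = v}.Nonempty →
    ∃ e : G.E, G.s e = v ∧ G.r e ∈ M

def MT3on (G : LPGraph) (M : Set G.V) : Prop :=
  ∀ v ∈ M, ∀ w ∈ M, ∃ y ∈ M, G.Reaches v y ∧ G.Reaches w y

def MT3 (G : LPGraph) : Prop :=
  ∀ v w : G.V, ∃ y : G.V, G.Reaches v y ∧ G.Reaches w y

def Omega (G : LPGraph) (X : Set G.V) : Set G.V :=
  {w | w ∉ X ∧ ∀ v ∈ X, ¬ G.Reaches w v}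

def OmegaV (G : LPGraph) (v : G.V) : Set G.V :=
  {w | w ≠ v ∧ ¬ G.Reaches w v}

end LPGraph

namespace LPGraph

def IsBifurcation (G : LPGraph) (v : G.V) : Prop :=
  ∃ e f : G.E, e ≠ f ∧ G.s e = v ∧ G.s f = v

def IsPathList (G : LPGraph) (l : List G.E) : Prop :=
  l.Chain' (fun e f => G.r e = G.s f)

def IsClosedPath (G : LPGraph) (v : G.V) (l : List G.E) : Prop :=
  l ≠ [] ∧ G.IsPathList l ∧ (∀ e ∈ l.head?, G.s e = v) ∧ (∀ e ∈ l.getLast?, G.r e = v)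

def IsClosedSimplePath (G : LPGraph) (v : G.V) (l : List G.E) : Prop :=
  G.IsClosedPath v l ∧ ∀ e ∈ l.tail, G.s e ≠ v

def ConditionK (G : LPGraph) : Prop :=
  ∀ v : G.V, (¬ ∃ l : List G.E, G.IsClosedPath v l) ∨
    (∃ l₁ l₂ : List G.E, G.IsClosedSimplePath v l₁ ∧ G.IsClosedSimplePath v l₂ ∧ l₁ ≠ l₂)

def ConditionL (G : LPGraph) : Prop :=
  ∀ (v : G.V) (l : List G.E), G.IsClosedSimplePath v l →
    ∃ e ∈ l, ∃ f : G.E, f ≠ e ∧ G.s f = G.s e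

/-- `v` is a line point: no vertex in the tree of `v` is a bifurcation or the base of a
closed path. -/
def LinePoint (G : LPGraph) (v : G.V) : Prop :=
  ∀ w : G.V, G.Reaches v w →
    ¬ G.IsBifurcation w ∧ ¬ ∃ l : List G.E, G.IsClosedPath w l

/-- `B_H`: vertices outside `H` emitting infinitely many edges, but finitely many
(and at least one) into `E⁰ \ H`. -/
def BH (G : LPGraph) (H : Set G.V) : Set G.V :=
  {v | v ∉ H ∧ {e : G.E | G.s e = v}.Infinite ∧
    {e : G.E | G.s e = v ∧ G.r e ∉ H}.Finite ∧
    {e : G.E | G.s e = v ∧ G.r e ∉ H}.Nonempty}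

/-- An admissible pair: `H` hereditary saturated, `S ⊆ B_H`. -/
def Admissible (G : LPGraph) (H S : Set G.V) : Prop :=
  G.Hereditary H ∧ G.Saturated H ∧ S ⊆ G.BH H

/-- Finite paths in `G`, indexed by source and range. -/
inductive Path (G : LPGraph) : G.V → G.V → Type
  | nil (v : G.V) : Path G v v
  | cons (e : G.E) {w : G.V} (p : Path G (G.r e) w) : Path G (G.s e) w

def Path.length {G : LPGraph} : ∀ {v w : G.V}, Path G v w → ℕ
  | _, _, .nil _ => 0
  | _, _, .cons _ p => p.length + 1

/-- The path contains no bifurcations among the sources of its edges. -/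
def Path.NoBif {G : LPGraph} : ∀ {v w : G.V}, Path G v w → Prop
  | _, _, .nil _ => True
  | _, _, .cons e p => (∀ f : _, LPGraph.s _ f = LPGraph.s _ e → f = e) ∧ p.NoBif

end LPGraph

/-- Generators of the Leavitt path algebra: vertices, real edges and ghost edges. -/
inductive LGen (G : LPGraph) : Type
  | vertex : G.V → LGen G
  | edge : G.E → LGen G
  | ghost : G.E → LGen G

variable (R : Type) [CommRing R] (G : LPGraph)

noncomputable def fv (v : G.V) : FreeAlgebra R (LGen G) := FreeAlgebra.ι R (LGen.vertex v)
noncomputable def fe (e : G.E) : FreeAlgebra R (LGen G) := FreeAlgebra.ι R (LGen.edge e)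
noncomputable def fg (e : G.E) : FreeAlgebra R (LGen G) := FreeAlgebra.ι R (LGen.ghost e)

/-- The defining relations of the Leavitt path algebra. -/
inductive LRel : FreeAlgebra R (LGen G) → FreeAlgebra R (LGen G) → Prop
  | idem (v : G.V) : LRel (fv R G v * fv R G v) (fv R G v)
  | orth (v w : G.V) (h : v ≠ w) : LRel (fv R G v * fv R G w) 0
  | edge_src (e : G.E) : LRel (fv R G (G.s e) * fe R G e) (fe R G e)
  | edge_rng (e : G.E) : LRel (fe R G e * fv R G (G.r e)) (fe R G e)
  | ghost_rng (e : G.E) : LRel (fv R G (G.r e) * fg R G e) (fg R G e)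
  | ghost_src (e : G.E) : LRel (fg R G e * fv R G (G.s e)) (fg R G e)
  | ck1_same (e : G.E) : LRel (fg R G e * fe R G e) (fv R G (G.r e))
  | ck1_diff (e f : G.E) (h : e ≠ f) : LRel (fg R G e * fe R G f) 0
  | ck2 (v : G.V) (h1 : {e : G.E | G.s e = v}.Finite)
      (h2 : {e : G.E | G.s e = v}.Nonempty) :
      LRel (fv R G v) (∑ e ∈ h1.toFinset, fe R G e * fg R G e)

/-- The Leavitt path algebra `L_R(E)`. -/
abbrev LPA := RingQuot (LRel R G)

noncomputable def Xv (v : G.V) : LPA R G := RingQuot.mkAlgHom R (LRel R G) (fv R G v)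
noncomputable def Xe (e : G.E) : LPA R G := RingQuot.mkAlgHom R (LRel R G) (fe R G e)
noncomputable def Xg (e : G.E) : LPA R G := RingQuot.mkAlgHom R (LRel R G) (fg R G e)

open MulOpposite in
/-- The involution on `L_R(E)`, built from the universal property, sending
`v ↦ v`, `e ↦ e*`, `e* ↦ e` and reversing products. -/
noncomputable def preStar : FreeAlgebra R (LGen G) →ₐ[R] (LPA R G)ᵐᵒᵖ :=
  FreeAlgebra.lift R fun x => match x with
    | LGen.vertex v => op (Xv R G v)
    | LGen.edge e => op (Xg R G e)
    | LGen.ghost e => op (Xe R G e)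

section starlemmas

lemma Xv_mul_self (v : G.V) : Xv R G v * Xv R G v = Xv R G v := by
  simpa only [Xv, map_mul] using RingQuot.mkAlgHom_rel R (LRel.idem (R := R) (G := G) v)

lemma Xv_mul_Xv (v w : G.V) (h : v ≠ w) : Xv R G v * Xv R G w = 0 := by
  simpa only [Xv, map_mul, map_zero] using
    RingQuot.mkAlgHom_rel R (LRel.orth (R := R) (G := G) v w h)

lemma Xv_mul_Xe (e : G.E) : Xv R G (G.s e) * Xe R G e = Xe R G e := by
  simpa only [Xv, Xe, map_mul] using RingQuot.mkAlgHom_rel R (LRel.edge_src (R := R) (G := G) e)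

lemma Xe_mul_Xv (e : G.E) : Xe R G e * Xv R G (G.r e) = Xe R G e := by
  simpa only [Xv, Xe, map_mul] using RingQuot.mkAlgHom_rel R (LRel.edge_rng (R := R) (G := G) e)

lemma Xv_mul_Xg (e : G.E) : Xv R G (G.r e) * Xg R G e = Xg R G e := by
  simpa only [Xv, Xg, map_mul] using RingQuot.mkAlgHom_rel R (LRel.ghost_rng (R := R) (G := G) e)

lemma Xg_mul_Xv (e : G.E) : Xg R G e * Xv R G (G.s e) = Xg R G e := by
  simpa only [Xv, Xg, map_mul] using RingQuot.mkAlgHom_rel R (LRel.ghost_src (R := R) (G := G) e)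

lemma Xg_mul_Xe_same (e : G.E) : Xg R G e * Xe R G e = Xv R G (G.r e) := by
  simpa only [Xv, Xe, Xg, map_mul] using
    RingQuot.mkAlgHom_rel R (LRel.ck1_same (R := R) (G := G) e)

lemma Xg_mul_Xe_diff (e f : G.E) (h : e ≠ f) : Xg R G e * Xe R G f = 0 := by
  simpa only [Xe, Xg, map_mul, map_zero] using
    RingQuot.mkAlgHom_rel R (LRel.ck1_diff (R := R) (G := G) e f h)

lemma Xv_ck2 (v : G.V) (h1 : {e : G.E | G.s e = v}.Finite)
    (h2 : {e : G.E | G.s e = v}.Nonempty) :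
    Xv R G v = ∑ e ∈ h1.toFinset, Xe R G e * Xg R G e := by
  simpa only [Xv, Xe, Xg, map_mul, map_sum] using
    RingQuot.mkAlgHom_rel R (LRel.ck2 (R := R) (G := G) v h1 h2)

open MulOpposite in
lemma preStar_rel : ∀ ⦃a b : FreeAlgebra R (LGen G)⦄, LRel R G a b →
    preStar R G a = preStar R G b := by
  intro a b h
  induction h with
  | idem v =>
      simp only [map_mul, preStar, fv, FreeAlgebra.lift_ι_apply, ← op_mul]
      exact congrArg op (Xv_mul_self R G v)
  | orth v w h =>
      simp only [map_mul, map_zero, preStar, fv, FreeAlgebra.lift_ι_apply, ← op_mul]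
      rw [Xv_mul_Xv R G w v h.symm]; rfl
  | edge_src e =>
      simp only [map_mul, preStar, fv, fe, FreeAlgebra.lift_ι_apply, ← op_mul]
      exact congrArg op (Xg_mul_Xv R G e)
  | edge_rng e =>
      simp only [map_mul, preStar, fv, fe, FreeAlgebra.lift_ι_apply, ← op_mul]
      exact congrArg op (Xv_mul_Xg R G e)
  | ghost_rng e =>
      simp only [map_mul, preStar, fv, fg, FreeAlgebra.lift_ι_apply, ← op_mul]
      exact congrArg op (Xe_mul_Xv R G e)
  | ghost_src e =>
      simp only [map_mul, preStar, fv, fg, FreeAlgebra.lift_ι_apply, ← op_mul]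
      exact congrArg op (Xv_mul_Xe R G e)
  | ck1_same e =>
      simp only [map_mul, preStar, fv, fe, fg, FreeAlgebra.lift_ι_apply, ← op_mul]
      exact congrArg op (Xg_mul_Xe_same R G e)
  | ck1_diff e f h =>
      simp only [map_mul, map_zero, preStar, fe, fg, FreeAlgebra.lift_ι_apply, ← op_mul]
      rw [Xg_mul_Xe_diff R G f e h.symm]; rfl
  | ck2 v h1 h2 =>
      simp only [map_sum, map_mul, preStar, fv, fe, fg, FreeAlgebra.lift_ι_apply, ← op_mul,
        ← Finset.op_sum]
      exact congrArg op (Xv_ck2 R G v h1 h2)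

end starlemmas

open MulOpposite in
noncomputable def starHom : LPA R G →ₐ[R] (LPA R G)ᵐᵒᵖ :=
  RingQuot.liftAlgHom R ⟨preStar R G, preStar_rel R G⟩

/-- The canonical involution (`*`-operation) on `L_R(E)`. -/
noncomputable def lpaStar (x : LPA R G) : LPA R G := MulOpposite.unop (starHom R G x)

/-- The element of `L_R(E)` associated to a path (product of real edges;
a trivial path gives the vertex). -/
noncomputable def pathE : ∀ {v w : G.V}, G.Path v w → LPA R G
  | _, _, .nil v => Xv R G v
  | _, _, .cons e p => Xe R G e * pathE p

/-- The ghost element `α*` of `L_R(E)` associated to a path `α`. -/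
noncomputable def pathG : ∀ {v w : G.V}, G.Path v w → LPA R G
  | _, _, .nil v => Xv R G v
  | _, _, .cons e p => pathG p * Xg R G e

/-- The homogeneous lpaComponent of degree `k` of `L_R(E)`:
the `R`-span of elements `αβ*` with `|α| - |β| = k`. -/
noncomputable def lpaComponent (k : ℤ) : Submodule R (LPA R G) :=
  Submodule.span R {x : LPA R G |
    ∃ (v₁ v₂ w : G.V) (α : G.Path v₁ w) (β : G.Path v₂ w),
      (α.length : ℤ) - (β.length : ℤ) = k ∧ x = pathE R G α * pathG R G β}

/-- A two-sided ideal of `L_R(E)` is graded if each of its elements is an `R`-linear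
combination of homogeneous elements belonging to the ideal. -/
def IsGraded (I : TwoSidedIdeal (LPA R G)) : Prop :=
  ∀ x ∈ I, x ∈ Submodule.span R
    (⋃ k : ℤ, (I : Set (LPA R G)) ∩ (lpaComponent R G k : Set (LPA R G)))

/-- A basic ideal: `r • x ∈ I` with `r ≠ 0` implies `x ∈ I`, for `x` a vertex or an
element of the form `v - ∑ᵢ eᵢeᵢ*` with `s(eᵢ) = v`. -/
def IsBasic (I : TwoSidedIdeal (LPA R G)) : Prop :=
  (∀ (r : R) (v : G.V), r ≠ 0 → r • Xv R G v ∈ I → Xv R G v ∈ I) ∧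
  (∀ (r : R) (v : G.V) (F : Finset G.E), r ≠ 0 → (∀ e ∈ F, G.s e = v) →
    r • (Xv R G v - ∑ e ∈ F, Xe R G e * Xg R G e) ∈ I →
    (Xv R G v - ∑ e ∈ F, Xe R G e * Xg R G e) ∈ I)

/-- `v^H = v - ∑_{s(e)=v, r(e)∉H} ee*`. -/
noncomputable def vH (H : Set G.V) (v : G.V) : LPA R G :=
  Xv R G v - ∑ᶠ (e : G.E) (_ : G.s e = v ∧ G.r e ∉ H), Xe R G e * Xg R G e

/-- `I(H,S)`: the two-sided ideal generated by `{v : v ∈ H} ∪ {v^H : v ∈ S}`. -/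
noncomputable def IHS (H S : Set G.V) : TwoSidedIdeal (LPA R G) :=
  TwoSidedIdeal.span ((fun v => Xv R G v) '' H ∪ (fun v => vH R G H v) '' S)

/-- The quotient ring of `L_R(E)` by a two-sided ideal, as an `R`-algebra. -/
abbrev QuotLPA (I : TwoSidedIdeal (LPA R G)) := RingQuot (fun a b : LPA R G => a - b ∈ I)

/-- The quotient graph `E/(H,S)`. -/
def quotGraph (H S : Set G.V) (hH : G.Hereditary H) : LPGraph where
  V := {v : G.V // v ∉ H} ⊕ {v : G.V // v ∈ G.BH H ∧ v ∉ S}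
  E := {e : G.E // G.r e ∉ H} ⊕ {e : G.E // G.r e ∈ G.BH H ∧ G.r e ∉ S}
  s := fun x => match x with
    | Sum.inl e => Sum.inl ⟨G.s e.1, fun h => e.2 (hH e.1 h)⟩
    | Sum.inr e => Sum.inl ⟨G.s e.1, fun h => e.2.1.1 (hH e.1 h)⟩
  r := fun x => match x with
    | Sum.inl e => Sum.inl ⟨G.r e.1, e.2⟩
    | Sum.inr e => Sum.inr ⟨G.r e.1, e.2⟩

/-!
Since `I` is an ideal, `v ∈ I` forces `e = v e ∈ I` and `r(e) = e* e ∈ I` for every edge `e`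
leaving `v`, and the Cuntz–Krieger relation `v = ∑ e e*` puts a regular vertex in `I` once all its
ranges are. For (MT3), if no common successor of `v` and `w` lies outside `I`, then the whole of
`v L_R(E) w` lies in `I`, and primeness puts `v` or `w` in `I`.
-/

theorem TwoSidedIdeal.mem_or_mem_of_forall_mul_mul_mem {A : Type*} [Ring A]
    {I : TwoSidedIdeal A}
    (hprime : ∀ J₁ J₂ : TwoSidedIdeal A, (∀ a ∈ J₁, ∀ b ∈ J₂, a * b ∈ I) → J₁ ≤ I ∨ J₂ ≤ I)
    {x y : A} (hxy : ∀ c, x * c * y ∈ I) : x ∈ I ∨ y ∈ I := by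
  have hy : ∀ b ∈ span {y}, ∀ c, x * c * b ∈ I := by
    intro b hb
    induction hb using span_induction with
    | mem b hb => rw [Set.mem_singleton_iff.mp hb]; exact hxy
    | zero => simp [I.zero_mem]
    | add b b' _ _ ihb ihb' => intro c; rw [mul_add]; exact I.add_mem (ihb c) (ihb' c)
    | neg b _ ihb => intro c; rw [mul_neg]; exact I.neg_mem (ihb c)
    | left_absorb a b _ ihb => intro c; rw [← mul_assoc, mul_assoc x]; exact ihb (c * a)
    | right_absorb a b _ ihb => intro c; rw [← mul_assoc]; exact I.mul_mem_right _ _ (ihb c)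
  have hx : ∀ a ∈ span {x}, ∀ b ∈ span {y}, a * b ∈ I := by
    intro a ha
    induction ha using span_induction with
    | mem a ha => rw [Set.mem_singleton_iff.mp ha]; simpa using fun b hb => hy b hb 1
    | zero => simp [I.zero_mem]
    | add a a' _ _ iha iha' =>
      intro b hb; rw [add_mul]; exact I.add_mem (iha b hb) (iha' b hb)
    | neg a _ iha => intro b hb; rw [neg_mul]; exact I.neg_mem (iha b hb)
    | left_absorb c a _ iha => intro b hb; rw [mul_assoc]; exact I.mul_mem_left _ _ (iha b hb)
    | right_absorb c a _ iha =>
      intro b hb; rw [mul_assoc]; exact iha _ ((span {y}).mul_mem_left c b hb)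
  exact (hprime _ _ hx).imp (· (subset_span rfl)) (· (subset_span rfl))

namespace LPGraph.Path

variable {G : LPGraph}

def append : ∀ {v w u : G.V}, G.Path v w → G.Path w u → G.Path v u
  | _, _, _, .nil _, q => q
  | _, _, _, .cons e p, q => .cons e (append p q)

theorem reaches : ∀ {v w : G.V}, G.Path v w → G.Reaches v w
  | _, _, .nil _ => Relation.ReflTransGen.refl
  | _, _, .cons e p => Relation.ReflTransGen.head ⟨e, rfl, rfl⟩ p.reaches

end LPGraph.Path

def pathMonomialsFrom (v : G.V) : Set (LPA R G) :=
  {x | ∃ (z b : G.V) (α : G.Path v z) (β : G.Path b z), x = pathE R G α * pathG R G β}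

section

variable {R G}

theorem Xv_mem_of_reaches (I : TwoSidedIdeal (LPA R G)) {v w : G.V} (hvw : G.Reaches v w)
    (hv : Xv R G v ∈ I) : Xv R G w ∈ I := by
  induction hvw with
  | refl => exact hv
  | tail _ hstep ih =>
    obtain ⟨e, rfl, rfl⟩ := hstep
    have he : Xe R G e ∈ I := Xv_mul_Xe R G e ▸ I.mul_mem_right _ _ ih
    exact Xg_mul_Xe_same R G e ▸ I.mul_mem_left _ _ he

theorem Xv_mem_of_forall_range_mem (I : TwoSidedIdeal (LPA R G)) {v : G.V}
    (hfin : {e : G.E | G.s e = v}.Finite) (hne : {e : G.E | G.s e = v}.Nonempty)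
    (hr : ∀ e : G.E, G.s e = v → Xv R G (G.r e) ∈ I) : Xv R G v ∈ I := by
  rw [Xv_ck2 R G v hfin hne]
  refine sum_mem fun e he => ?_
  rw [← Xe_mul_Xv, mul_assoc]
  exact I.mul_mem_left _ _ (I.mul_mem_right _ _ (hr e (hfin.mem_toFinset.mp he)))

theorem Xv_mul_pathE : ∀ {v w : G.V} (p : G.Path v w),
    Xv R G v * pathE R G p = pathE R G p
  | _, _, .nil v => Xv_mul_self R G v
  | _, _, .cons e p => by
    change Xv R G (G.s e) * (Xe R G e * pathE R G p) = _
    rw [← mul_assoc, Xv_mul_Xe]; rfl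

theorem Xv_mul_pathG : ∀ {v w : G.V} (p : G.Path v w),
    Xv R G w * pathG R G p = pathG R G p
  | _, _, .nil v => Xv_mul_self R G v
  | _, _, .cons e p => by
    change Xv R G _ * (pathG R G p * Xg R G e) = _
    rw [← mul_assoc, Xv_mul_pathG p]; rfl

theorem pathG_mul_Xv_self : ∀ {v w : G.V} (p : G.Path v w),
    pathG R G p * Xv R G v = pathG R G p
  | _, _, .nil v => Xv_mul_self R G v
  | _, _, .cons e p => by
    change pathG R G p * Xg R G e * Xv R G (G.s e) = _
    rw [mul_assoc, Xg_mul_Xv]; rfl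

theorem pathG_mul_Xv_of_ne : ∀ {v w : G.V} (p : G.Path v w) {u : G.V}, u ≠ v →
    pathG R G p * Xv R G u = 0
  | _, _, .nil v, u, h => Xv_mul_Xv R G v u h.symm
  | _, _, .cons e p, u, h => by
    change pathG R G p * Xg R G e * Xv R G u = 0
    rw [mul_assoc, ← Xg_mul_Xv, mul_assoc, Xv_mul_Xv R G (G.s e) u h.symm, mul_zero, mul_zero]

theorem pathE_append : ∀ {v w u : G.V} (p : G.Path v w) (q : G.Path w u),
    pathE R G (p.append q) = pathE R G p * pathE R G q
  | _, _, _, .nil v, q => (Xv_mul_pathE q).symm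
  | _, _, _, .cons e p, q => by
    change Xe R G e * pathE R G (p.append q) = Xe R G e * pathE R G p * pathE R G q
    rw [pathE_append p q, mul_assoc]

theorem Xv_mem_pathMonomialsFrom (v : G.V) : Xv R G v ∈ pathMonomialsFrom R G v :=
  ⟨v, v, .nil v, .nil v, (Xv_mul_self R G v).symm⟩

variable {v : G.V} {x : LPA R G}

theorem mul_Xv_mem_span_pathMonomialsFrom (hx : x ∈ pathMonomialsFrom R G v) (u : G.V) :
    x * Xv R G u ∈ Submodule.span R (pathMonomialsFrom R G v) := by
  obtain ⟨z, b, α, β, rfl⟩ := hx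
  by_cases h : u = b
  · subst h
    rw [mul_assoc, pathG_mul_Xv_self]
    exact Submodule.subset_span ⟨z, u, α, β, rfl⟩
  · rw [mul_assoc, pathG_mul_Xv_of_ne β h, mul_zero]
    exact Submodule.zero_mem _

theorem mul_Xe_mem_span_pathMonomialsFrom (hx : x ∈ pathMonomialsFrom R G v) (f : G.E) :
    x * Xe R G f ∈ Submodule.span R (pathMonomialsFrom R G v) := by
  obtain ⟨z, b, α, β, rfl⟩ := hx
  cases β with
  | nil =>
    change pathE R G α * Xv R G z * Xe R G f ∈ _
    by_cases h : z = G.s f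
    · subst h
      refine Submodule.subset_span ⟨G.r f, G.r f, α.append (.cons f (.nil _)), .nil _, ?_⟩
      rw [pathE_append]
      change _ = pathE R G α * (Xe R G f * Xv R G (G.r f)) * Xv R G (G.r f)
      rw [mul_assoc, Xv_mul_Xe, Xe_mul_Xv, mul_assoc, Xe_mul_Xv]
    · rw [mul_assoc, ← Xv_mul_Xe, ← mul_assoc (Xv R G z), Xv_mul_Xv R G z (G.s f) h,
        zero_mul, mul_zero]
      exact Submodule.zero_mem _
  | cons e p =>
    change pathE R G α * (pathG R G p * Xg R G e) * Xe R G f ∈ _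
    rw [mul_assoc, mul_assoc]
    by_cases h : e = f
    · subst h
      rw [Xg_mul_Xe_same, pathG_mul_Xv_self p]
      exact Submodule.subset_span ⟨z, G.r e, α, p, rfl⟩
    · rw [Xg_mul_Xe_diff R G e f h, mul_zero, mul_zero]
      exact Submodule.zero_mem _

theorem mul_Xg_mem_span_pathMonomialsFrom (hx : x ∈ pathMonomialsFrom R G v) (f : G.E) :
    x * Xg R G f ∈ Submodule.span R (pathMonomialsFrom R G v) := by
  obtain ⟨z, b, α, β, rfl⟩ := hx
  by_cases h : b = G.r f
  · subst h
    exact Submodule.subset_span ⟨z, G.s f, α, .cons f β, mul_assoc _ _ _⟩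
  · rw [mul_assoc, ← Xv_mul_Xg, ← mul_assoc (pathG R G β), pathG_mul_Xv_of_ne β (Ne.symm h),
      zero_mul, mul_zero]
    exact Submodule.zero_mem _

theorem mul_mem_span_pathMonomialsFrom {y : LPA R G}
    (hy : y ∈ Submodule.span R (pathMonomialsFrom R G v)) (c : LPA R G) :
    y * c ∈ Submodule.span R (pathMonomialsFrom R G v) := by
  obtain ⟨c, rfl⟩ := RingQuot.mkAlgHom_surjective R (LRel R G) c
  induction c using FreeAlgebra.induction generalizing y with
  | grade0 r =>
    rw [AlgHom.commutes, ← Algebra.commutes, ← Algebra.smul_def]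
    exact Submodule.smul_mem _ r hy
  | grade1 g =>
    induction hy using Submodule.span_induction with
    | mem x hx =>
      cases g with
      | vertex u => exact mul_Xv_mem_span_pathMonomialsFrom hx u
      | edge f => exact mul_Xe_mem_span_pathMonomialsFrom hx f
      | ghost f => exact mul_Xg_mem_span_pathMonomialsFrom hx f
    | zero => rw [zero_mul]; exact Submodule.zero_mem _
    | add x x' _ _ ihx ihx' => rw [add_mul]; exact Submodule.add_mem _ ihx ihx'
    | smul r x _ ih => rw [smul_mul_assoc]; exact Submodule.smul_mem _ r ih
  | mul a b iha ihb => rw [map_mul, ← mul_assoc]; exact ihb (iha hy)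
  | add a b iha ihb => rw [map_add, mul_add]; exact Submodule.add_mem _ (iha hy) (ihb hy)

/-- `v L_R(E)` is spanned by monomials `α β*` with `α` starting at `v`, and `α β* w` is either `0`
or `α z β*` with `z` the common range of `α` and `β`, a common successor of `v` and `w`. -/
theorem Xv_mul_mul_Xv_mem (I : TwoSidedIdeal (LPA R G)) {w : G.V}
    (hI : ∀ z : G.V, G.Reaches v z → G.Reaches w z → Xv R G z ∈ I) (c : LPA R G) :
    Xv R G v * c * Xv R G w ∈ I := by
  suffices ∀ y ∈ Submodule.span R (pathMonomialsFrom R G v), y * Xv R G w ∈ I from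
    this _ (mul_mem_span_pathMonomialsFrom (Submodule.subset_span (Xv_mem_pathMonomialsFrom v)) c)
  intro y hy
  induction hy using Submodule.span_induction with
  | mem x hx =>
    obtain ⟨z, b, α, β, rfl⟩ := hx
    by_cases hb : w = b
    · subst hb
      rw [mul_assoc, pathG_mul_Xv_self β, ← Xv_mul_pathG β, ← mul_assoc]
      exact I.mul_mem_right _ _ (I.mul_mem_left _ _ (hI z α.reaches β.reaches))
    · rw [mul_assoc, pathG_mul_Xv_of_ne β hb, mul_zero]
      exact I.zero_mem
  | zero => rw [zero_mul]; exact I.zero_mem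
  | add x y _ _ ihx ihy => rw [add_mul]; exact I.add_mem ihx ihy
  | smul r x _ ih => rw [smul_mul_assoc, Algebra.smul_def]; exact I.mul_mem_left _ _ ih

end

/-- If `I` is a prime ideal of `L_R(E)`, then `M = E⁰ \ (I ∩ E⁰)` is a maximal tail. -/
theorem prime_ideal_maximal_tail (G : LPGraph) (R : Type) [CommRing R]
    (I : TwoSidedIdeal (LPA R G))
    (hprime : ∀ J₁ J₂ : TwoSidedIdeal (LPA R G),
      (∀ a ∈ J₁, ∀ b ∈ J₂, a * b ∈ I) → J₁ ≤ I ∨ J₂ ≤ I) :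
    G.MT1 {v : G.V | Xv R G v ∉ I} ∧ G.MT2 {v : G.V | Xv R G v ∉ I} ∧
      G.MT3on {v : G.V | Xv R G v ∉ I} := by
  refine ⟨fun v w hw hvw hv => hw (Xv_mem_of_reaches I hvw hv), ?_, ?_⟩
  · intro v hv hfin hne
    by_contra! hr
    exact hv (Xv_mem_of_forall_range_mem I hfin hne fun e he => not_not.mp (hr e he))
  · intro v hv w hw
    by_contra! hvw
    have hI : ∀ z, G.Reaches v z → G.Reaches w z → Xv R G z ∈ I :=
      fun z hvz hwz => not_not.mp fun hz => hvw z hz hvz hwz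
    exact (TwoSidedIdeal.mem_or_mem_of_forall_mul_mul_mem hprime
      (Xv_mul_mul_Xv_mem I hI)).elim hv hw
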